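/- arXiv:1109.6277 — 2 statements merged into one kernel-verified Lean document; each statement's English description precedes it below -/
import Mathlib

section
/- For the cycle C_n with n ≥ 3 and any vertex v: DV(v) = 1 if n ≡ 0 (mod 3); DV(v) = ⌈n/3⌉(1 + ⌈n/3⌉)/2 if n ≡ 1 (mod 3); and DV(v) = ⌈n/3⌉ if n ≡ 2 (mod 3). -/
/-- `D` is a dominating set of `G`: every vertex not in `D` is adjacent to a vertex of `D`. -/
def IsDomSet {V : Type*} (G : SimpleGraph V) (D : Finset V) : Prop :=
  ∀ v, v ∉ D → ∃ u ∈ D, G.Adj u v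

/-- The domination number `γ(G)`: the minimum cardinality of a dominating set. -/
noncomputable def domNum {V : Type*} (G : SimpleGraph V) : ℕ :=
  sInf {n | ∃ D : Finset V, IsDomSet G D ∧ D.card = n}

/-- The collection of minimum dominating sets of `G`. -/
def minDomSets {V : Type*} (G : SimpleGraph V) : Set (Finset V) :=
  {D | IsDomSet G D ∧ D.card = domNum G}

/-- `τ(G)`: the number of minimum dominating sets of `G`. -/
noncomputable def tau {V : Type*} (G : SimpleGraph V) : ℕ :=
  (minDomSets G).ncard

/-- `DV(v)`: the number of minimum dominating sets of `G` containing `v`. -/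
noncomputable def DV {V : Type*} (G : SimpleGraph V) (v : V) : ℕ :=
  {D ∈ minDomSets G | v ∈ D}.ncard

/-!
Rotating the cycle, we may take `v = 0`. Reading the vertices `0, 1, …, n - 1` in order and
cutting before each element of a set `D ∋ 0` identifies such sets with compositions of `n`:
`D` is the set of block starts, `|D|` is the number of blocks, and `D` dominates `C_n` exactly
when every block has size at most `3`. Closed neighbourhoods have three vertices, so
`γ(C_n) = k = ⌈n/3⌉`, and the minimum dominating sets through `0` are the compositions of `n`
into `k` blocks of size at most `3`. Writing the blocks as `3 - δ i`, these are the
`δ : Fin k → ℕ` with `∑ δ = 3k - n ≤ 2`, counted by stars and bars: `multichoose k (3k - n)`,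
which is `1`, `k` or `k (k + 1) / 2`.
-/

open Finset SimpleGraph

section Domination

variable {V W : Type*} {G : SimpleGraph V} {G' : SimpleGraph W}

lemma domNum_eq_of_forall_le {k : ℕ} (hex : ∃ D, IsDomSet G D ∧ D.card = k)
    (hle : ∀ D, IsDomSet G D → k ≤ D.card) : domNum G = k := by
  obtain ⟨D, hD, rfl⟩ := hex
  refine le_antisymm (Nat.sInf_le ⟨D, hD, rfl⟩) (le_csInf ⟨_, D, hD, rfl⟩ ?_)
  rintro _ ⟨D', hD', rfl⟩
  exact hle D' hD'

lemma IsDomSet.card_le_mul_card [Fintype V] [DecidableEq V] [DecidableRel G.Adj] {d : ℕ}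
    (hd : ∀ v, G.degree v ≤ d) {D : Finset V} (hD : IsDomSet G D) :
    Fintype.card V ≤ (d + 1) * D.card := by
  have hcover : (univ : Finset V) ⊆ D.biUnion fun u => insert u (G.neighborFinset u) := by
    intro v _
    by_cases hv : v ∈ D
    · exact mem_biUnion.2 ⟨v, hv, mem_insert_self v _⟩
    · obtain ⟨u, hu, huv⟩ := hD v hv
      exact mem_biUnion.2 ⟨u, hu, mem_insert_of_mem ((G.mem_neighborFinset u v).2 huv)⟩
  calc Fintype.card V ≤ ∑ u ∈ D, (insert u (G.neighborFinset u)).card :=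
        (card_le_card hcover).trans card_biUnion_le
    _ ≤ ∑ _u ∈ D, (d + 1) :=
        sum_le_sum fun u _ => (card_insert_le _ _).trans (Nat.succ_le_succ (hd u))
    _ = (d + 1) * D.card := by rw [sum_const, smul_eq_mul, mul_comm]

lemma IsDomSet.map (e : G ≃g G') {D : Finset V} (hD : IsDomSet G D) :
    IsDomSet G' (e.toEquiv.finsetCongr D) := by
  intro w hw
  obtain ⟨u, hu, hadj⟩ := hD (e.symm w) fun h => hw (mem_map.2 ⟨_, h, e.apply_symm_apply w⟩)
  exact ⟨e u, mem_map_of_mem _ hu, by simpa using e.map_adj_iff.2 hadj⟩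

lemma domNum_congr (e : G ≃g G') : domNum G = domNum G' := by
  unfold domNum
  congr 1
  ext m
  constructor
  · rintro ⟨D, hD, rfl⟩
    exact ⟨_, hD.map e, card_map _⟩
  · rintro ⟨D, hD, rfl⟩
    exact ⟨_, hD.map e.symm, card_map _⟩

lemma DV_congr (e : G ≃g G') (v : V) : DV G' (e v) = DV G v := by
  have himage : {D ∈ minDomSets G' | e v ∈ D} =
      e.toEquiv.finsetCongr '' {D ∈ minDomSets G | v ∈ D} := by
    ext D
    constructor
    · rintro ⟨⟨hD, hcard⟩, hv⟩
      refine ⟨e.toEquiv.finsetCongr.symm D,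
        ⟨⟨hD.map e.symm, by simp [hcard, domNum_congr e]⟩, ?_⟩, Equiv.apply_symm_apply _ D⟩
      simpa [mem_map_equiv] using hv
    · rintro ⟨D, ⟨⟨hD, hcard⟩, hv⟩, rfl⟩
      exact ⟨⟨hD.map e, by simp [hcard, domNum_congr e]⟩, mem_map_of_mem _ hv⟩
  rw [DV, DV, himage, Set.ncard_image_of_injective _ (Equiv.injective _)]

end Domination

section Cycle

variable {n : ℕ}

lemma cycleGraph_adj_iff_val (hn : 1 < n) {x y : Fin n} :
    (cycleGraph n).Adj x y ↔ y.val = (x.val + 1) % n ∨ x.val = (y.val + 1) % n := by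
  have : NeZero n := ⟨by omega⟩
  have hone : ((1 : Fin n) : ℕ) = 1 := by rw [Fin.val_one', Nat.mod_eq_of_lt hn]
  have hsub : ∀ a b : Fin n, (a - b).val = 1 ↔ a.val = (b.val + 1) % n := by
    intro a b
    rw [← hone, Fin.val_inj, sub_eq_iff_eq_add, Fin.ext_iff, Fin.val_add, hone, add_comm 1]
  rw [cycleGraph_adj', hsub, hsub, or_comm]

lemma cycleGraph_adj_val_of_lt {x y : Fin n} (hx₀ : 0 < x.val) (hx : x.val + 1 < n)
    (h : (cycleGraph n).Adj y x) : y.val + 1 = x.val ∨ y.val = x.val + 1 := by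
  rcases (cycleGraph_adj_iff_val (by omega)).1 h with h | h
  · rcases Nat.lt_or_ge (y.val + 1) n with hy | hy
    · rw [Nat.mod_eq_of_lt hy] at h
      omega
    · rw [show y.val + 1 = n by omega, Nat.mod_self] at h
      omega
  · rw [Nat.mod_eq_of_lt hx] at h
    omega

lemma DV_cycleGraph_eq_DV_zero [NeZero n] (v : Fin n) :
    DV (cycleGraph n) v = DV (cycleGraph n) 0 := by
  let rotate : cycleGraph n ≃g cycleGraph n :=
    { Equiv.addLeft v with map_rel_iff' := by simp [cycleGraph_adj'] }
  simpa [rotate] using DV_congr rotate 0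

lemma IsDomSet.le_three_mul_card_of_cycleGraph (hn : 3 ≤ n) {D : Finset (Fin n)}
    (hD : IsDomSet (cycleGraph n) D) : n ≤ 3 * D.card := by
  obtain ⟨m, rfl⟩ := Nat.exists_eq_add_of_le' hn
  simpa using hD.card_le_mul_card (d := 2) fun v => cycleGraph_degree_three_le.le

end Cycle

namespace Composition

variable {n : ℕ} (c : Composition n)

def blockStarts : Finset (Fin n) :=
  univ.image fun i : Fin c.length =>
    ⟨c.sizeUpTo i, (c.sizeUpTo_strict_mono i.2).trans_le (c.sizeUpTo_le _)⟩

variable {c} in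
lemma mem_blockStarts {x : Fin n} : x ∈ c.blockStarts ↔ ∃ i : Fin c.length, c.sizeUpTo i = x := by
  simp [blockStarts, Fin.ext_iff]

lemma card_blockStarts : c.blockStarts.card = c.length := by
  refine (card_image_of_injective _ fun i j hij => ?_).trans (card_fin _)
  have : c.boundary i.castSucc = c.boundary j.castSucc := Fin.ext (congrArg Fin.val hij :)
  exact Fin.castSucc_injective _ (c.boundary.injective this)

lemma sizeUpTo_mod_mem_blockStarts (hn : 0 < n) (j : ℕ) :
    (⟨c.sizeUpTo j % n, Nat.mod_lt _ hn⟩ : Fin n) ∈ c.blockStarts := by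
  rw [mem_blockStarts]
  rcases lt_or_ge j c.length with hj | hj
  · refine ⟨⟨j, hj⟩, (Nat.mod_eq_of_lt ?_).symm⟩
    exact (c.sizeUpTo_strict_mono hj).trans_le (c.sizeUpTo_le _)
  · exact ⟨⟨0, c.length_pos_of_pos hn⟩, by simp [c.sizeUpTo_ofLength_le j hj]⟩

lemma zero_mem_blockStarts [NeZero n] : 0 ∈ c.blockStarts := by
  simpa using c.sizeUpTo_mod_mem_blockStarts (NeZero.pos n) 0

lemma notMem_blockStarts (i : Fin c.length) {x : Fin n} (h₁ : c.sizeUpTo i < x)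
    (h₂ : x < c.sizeUpTo (i + 1)) : x ∉ c.blockStarts := by
  rw [mem_blockStarts]
  rintro ⟨j, hj⟩
  rw [← hj] at h₁ h₂
  have := c.monotone_sizeUpTo.reflect_lt h₁
  have := c.monotone_sizeUpTo.reflect_lt h₂
  omega

lemma boundaries_eq_insert_last :
    c.boundaries = insert (Fin.last n) (c.blockStarts.map Fin.castSuccEmb) := by
  ext b
  simp only [boundaries, mem_map, mem_univ, true_and, mem_insert, blockStarts, mem_image]
  constructor
  · rintro ⟨i, rfl⟩
    induction i using Fin.lastCases with
    | last => exact Or.inl c.boundary_last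
    | cast j => exact Or.inr ⟨_, ⟨j, rfl⟩, rfl⟩
  · rintro (rfl | ⟨_, ⟨i, rfl⟩, rfl⟩)
    · exact ⟨_, c.boundary_last⟩
    · exact ⟨i.castSucc, rfl⟩

variable (n) in
lemma blockStarts_injective :
    Function.Injective (blockStarts : Composition n → Finset (Fin n)) := by
  intro c c' h
  apply (compositionEquiv n).injective
  ext1
  simp only [compositionEquiv, Equiv.coe_fn_mk, toCompositionAsSet_boundaries,
    boundaries_eq_insert_last, h]

lemma exists_blockStarts_eq [NeZero n] {D : Finset (Fin n)} (h₀ : 0 ∈ D) :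
    ∃ c : Composition n, c.blockStarts = D := by
  let B : CompositionAsSet n :=
    ⟨insert (Fin.last n) (D.map Fin.castSuccEmb), by simpa using Or.inr h₀, mem_insert_self _ _⟩
  refine ⟨B.toComposition, ?_⟩
  have h : insert (Fin.last n) (B.toComposition.blockStarts.map Fin.castSuccEmb) =
      insert (Fin.last n) (D.map Fin.castSuccEmb) := by
    rw [← boundaries_eq_insert_last]
    exact B.toComposition_boundaries
  have hlast : ∀ s : Finset (Fin n), Fin.last n ∉ s.map Fin.castSuccEmb := by
    simp [Fin.castSucc_ne_last]
  have h' := congrArg (erase · (Fin.last n)) h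
  simp only [erase_insert (hlast _)] at h'
  exact map_inj.1 h'

lemma isDomSet_blockStarts_iff (hn : 3 ≤ n) :
    IsDomSet (cycleGraph n) c.blockStarts ↔ ∀ b ∈ c.blocks, b ≤ 3 := by
  constructor
  · intro hD b hb
    obtain ⟨i, rfl⟩ := List.mem_iff_get.1 hb
    by_contra! hbig
    change 3 < c.blocksFun i at hbig
    have hsucc := c.sizeUpTo_succ' i
    have hle := c.sizeUpTo_le (i + 1)
    let x : Fin n := ⟨c.sizeUpTo i + 2, by omega⟩
    obtain ⟨u, hu, hadj⟩ := hD x (c.notMem_blockStarts i (by simp [x]) (by simp [x]; omega))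
    have hu' := cycleGraph_adj_val_of_lt (by simp [x]) (by simp [x]; omega) hadj
    simp only [x] at hu'
    exact c.notMem_blockStarts i (x := u) (by omega) (by omega) hu
  · intro hb x hx
    have h₁ := c.sizeUpTo_index_le x
    have h₂ := c.lt_sizeUpTo_index_succ x
    have hsucc := c.sizeUpTo_succ' (c.index x)
    have hbi := hb _ (c.blocksFun_mem_blocks (c.index x))
    have hx₀ : c.sizeUpTo (c.index x) ≠ x := fun h => hx (mem_blockStarts.2 ⟨_, h⟩)
    simp only [Fin.val_succ] at h₂
    rcases (show x.val = c.sizeUpTo (c.index x) + 1 ∨ x.val + 1 = c.sizeUpTo (c.index x + 1) by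
      omega) with h | h
    · refine ⟨⟨c.sizeUpTo (c.index x), by omega⟩, mem_blockStarts.2 ⟨_, rfl⟩,
        (cycleGraph_adj_iff_val (by omega)).2 (Or.inl ?_)⟩
      rw [h, Nat.mod_eq_of_lt (h ▸ x.isLt)]
    · refine ⟨_, c.sizeUpTo_mod_mem_blockStarts (by omega) (c.index x + 1),
        (cycleGraph_adj_iff_val (by omega)).2 (Or.inr ?_)⟩
      rw [h]

end Composition

section Counting

variable {n k m s : ℕ}

lemma sum_tsub_add_sum {a : Fin k → ℕ} (ha : ∀ i, a i ≤ m) :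
    ∑ i, (m - a i) + ∑ i, a i = m * k := by
  rw [← sum_add_distrib]
  simp [Nat.sub_add_cancel (ha _), mul_comm]

lemma apply_le_of_sum_eq {δ : Fin k → ℕ} (h : ∑ i, δ i = s) (i : Fin k) : δ i ≤ s :=
  h ▸ single_le_sum (fun j _ => Nat.zero_le (δ j)) (mem_univ i)

lemma List.sum_fin_getD {l : List ℕ} (hl : l.length = k) : ∑ i : Fin k, l.getD i 0 = l.sum := by
  subst hl
  simp [Fin.sum_univ_getElem]

def Composition.equivDeficits (h : n + s = m * k) (hs : s < m) :
    {c : Composition n // c.length = k ∧ ∀ b ∈ c.blocks, b ≤ m} ≃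
      {δ : Fin k → ℕ // ∑ i, δ i = s} where
  toFun c := ⟨fun i => m - c.1.blocks.getD i 0, by
    have hle : ∀ i : Fin k, c.1.blocks.getD i 0 ≤ m := fun i => by
      rw [List.getD_eq_getElem _ _ (by simp [c.2.1])]
      exact c.2.2 _ (List.getElem_mem _)
    have := sum_tsub_add_sum hle
    rw [List.sum_fin_getD c.2.1, c.1.blocks_sum] at this
    change ∑ i : Fin k, (m - c.1.blocks.getD i 0) = s
    omega⟩
  invFun δ :=
    have hδ : ∀ i, δ.1 i < m := fun i => (apply_le_of_sum_eq δ.2 i).trans_lt hs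
    ⟨⟨List.ofFn fun i => m - δ.1 i, by simpa [List.mem_ofFn] using hδ, by
        have := sum_tsub_add_sum fun i => (hδ i).le
        rw [List.sum_ofFn]
        omega⟩,
      List.length_ofFn, by simp [List.mem_ofFn]⟩
  left_inv c := by
    apply Subtype.ext
    apply Composition.ext
    apply List.ext_getElem (by simp [c.2.1])
    intro i _ h
    simp only [List.getElem_ofFn, List.getD_eq_getElem _ _ h]
    exact Nat.sub_sub_self (c.2.2 _ (List.getElem_mem _))
  right_inv δ := by
    apply Subtype.ext
    funext i
    simpa using Nat.sub_sub_self ((apply_le_of_sum_eq δ.2 i).trans hs.le)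

lemma natCard_sum_eq_multichoose (k s : ℕ) :
    Nat.card {δ : Fin k → ℕ // ∑ i, δ i = s} = k.multichoose s := by
  rw [← Nat.card_congr (Sym.equivNatSumOfFintype (Fin k) s), Nat.card_eq_fintype_card,
    Sym.card_sym_eq_multichoose, Fintype.card_fin]

end Counting

open Composition in
lemma domNum_cycleGraph {n : ℕ} (hn : 3 ≤ n) : domNum (cycleGraph n) = (n + 2) / 3 := by
  apply domNum_eq_of_forall_le
  · have hks : n + (3 * ((n + 2) / 3) - n) = 3 * ((n + 2) / 3) := by omega
    obtain ⟨c, hlen, hc⟩ := (equivDeficits hks (by omega)).symm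
      ⟨Pi.single ⟨0, by omega⟩ (3 * ((n + 2) / 3) - n), by simp⟩
    exact ⟨c.blockStarts, (isDomSet_blockStarts_iff c hn).2 hc, by rw [card_blockStarts, hlen]⟩
  · intro D hD
    have := hD.le_three_mul_card_of_cycleGraph hn
    omega

open Composition in
lemma minDomSets_cycleGraph_zero_mem {n : ℕ} [NeZero n] (hn : 3 ≤ n) :
    {D ∈ minDomSets (cycleGraph n) | 0 ∈ D} =
      blockStarts '' {c | c.length = (n + 2) / 3 ∧ ∀ b ∈ c.blocks, b ≤ 3} := by
  ext D
  simp only [minDomSets, domNum_cycleGraph hn, Set.mem_ofPred_eq, Set.mem_image]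
  constructor
  · rintro ⟨⟨hD, hcard⟩, h₀⟩
    obtain ⟨c, rfl⟩ := exists_blockStarts_eq h₀
    exact ⟨c, ⟨by rw [← card_blockStarts, hcard], (isDomSet_blockStarts_iff c hn).1 hD⟩, rfl⟩
  · rintro ⟨c, ⟨hlen, hc⟩, rfl⟩
    exact ⟨⟨(isDomSet_blockStarts_iff c hn).2 hc, by rw [card_blockStarts, hlen]⟩,
      c.zero_mem_blockStarts⟩

open Composition in
lemma DV_cycleGraph {n : ℕ} (hn : 3 ≤ n) (v : Fin n) :
    DV (cycleGraph n) v = ((n + 2) / 3).multichoose (3 * ((n + 2) / 3) - n) := by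
  have : NeZero n := ⟨by omega⟩
  have hks : n + (3 * ((n + 2) / 3) - n) = 3 * ((n + 2) / 3) := by omega
  rw [DV_cycleGraph_eq_DV_zero, DV, minDomSets_cycleGraph_zero_mem hn,
    Set.ncard_image_of_injective _ (blockStarts_injective n), ← Nat.card_coe_set_eq,
    ← natCard_sum_eq_multichoose]
  exact Nat.card_congr (equivDeficits hks (by omega))

theorem stmt_14 (n : ℕ) (hn : 3 ≤ n) (v : Fin n) :
    (n % 3 = 0 → DV (SimpleGraph.cycleGraph n) v = 1) ∧
    (n % 3 = 1 → DV (SimpleGraph.cycleGraph n) v = (n + 2) / 3 * (1 + (n + 2) / 3) / 2) ∧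
    (n % 3 = 2 → DV (SimpleGraph.cycleGraph n) v = (n + 2) / 3) := by
  rw [DV_cycleGraph hn]
  refine ⟨fun h => ?_, fun h => ?_, fun h => ?_⟩
  · rw [show 3 * ((n + 2) / 3) - n = 0 by omega, Nat.multichoose_zero_right]
  · rw [show 3 * ((n + 2) / 3) - n = 2 by omega, Nat.multichoose_eq, Nat.choose_two_right,
      show (n + 2) / 3 + 2 - 1 = (n + 2) / 3 + 1 by omega, Nat.add_sub_cancel, mul_comm, add_comm 1]
  · rw [show 3 * ((n + 2) / 3) - n = 1 by omega, Nat.multichoose_one_right]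
end

section
/- For n ≥ 3, τ(P_n) ≤ τ(C_n), where P_n is the path obtained from the cycle C_n by deleting one edge. -/
/-!
Every dominating set of `P_n` also dominates `C_n ⊇ P_n`. The vertices `1, 4, 7, …` dominate
`P_n`, while a vertex of `C_n` dominates at most three vertices, so
`γ(P_n) = γ(C_n) = ⌈n/3⌉` and every minimum dominating set of `P_n` is one of `C_n`.
-/

open SimpleGraph Finset

section Domination

variable {V : Type*}

theorem IsDomSet.mono {G H : SimpleGraph V} (hGH : G ≤ H) {D : Finset V} (hD : IsDomSet G D) :
    IsDomSet H D := fun v hv => (hD v hv).imp fun _ ⟨hu, hadj⟩ => ⟨hu, hGH hadj⟩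

theorem isDomSet_univ [Fintype V] (G : SimpleGraph V) : IsDomSet G univ :=
  fun v hv => absurd (mem_univ v) hv

theorem domNum_le_card {G : SimpleGraph V} {D : Finset V} (hD : IsDomSet G D) :
    domNum G ≤ D.card :=
  Nat.sInf_le ⟨D, hD, rfl⟩

theorem exists_isDomSet_card_eq_domNum [Fintype V] (G : SimpleGraph V) :
    ∃ D : Finset V, IsDomSet G D ∧ D.card = domNum G :=
  Nat.sInf_mem (s := {n | ∃ D : Finset V, IsDomSet G D ∧ D.card = n})
    ⟨_, univ, isDomSet_univ G, rfl⟩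

theorem le_domNum [Fintype V] {G : SimpleGraph V} {k : ℕ}
    (h : ∀ D : Finset V, IsDomSet G D → k ≤ D.card) : k ≤ domNum G := by
  obtain ⟨D, hD, hcard⟩ := exists_isDomSet_card_eq_domNum G
  exact hcard ▸ h D hD

theorem domNum_anti [Fintype V] {G H : SimpleGraph V} (hGH : G ≤ H) : domNum H ≤ domNum G :=
  le_domNum fun _ hD => domNum_le_card (hD.mono hGH)

theorem card_le_mul_card_of_isDomSet [Fintype V] [DecidableEq V] {G : SimpleGraph V}
    [DecidableRel G.Adj] {k : ℕ} (hdeg : ∀ v, G.degree v ≤ k) {D : Finset V}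
    (hD : IsDomSet G D) : Fintype.card V ≤ (k + 1) * D.card := by
  have hcover : univ ⊆ D.biUnion fun u => insert u (G.neighborFinset u) := by
    intro v _
    by_cases hv : v ∈ D
    · exact mem_biUnion.mpr ⟨v, hv, mem_insert_self v _⟩
    · obtain ⟨u, hu, hadj⟩ := hD v hv
      exact mem_biUnion.mpr ⟨u, hu, mem_insert_of_mem ((G.mem_neighborFinset u v).mpr hadj)⟩
  calc Fintype.card V = (univ : Finset V).card := card_univ.symm
    _ ≤ (D.biUnion fun u => insert u (G.neighborFinset u)).card := card_le_card hcover
    _ ≤ ∑ u ∈ D, (insert u (G.neighborFinset u)).card := card_biUnion_le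
    _ ≤ ∑ _u ∈ D, (k + 1) := sum_le_sum fun u _ => (card_insert_le _ _).trans (by
        simpa [card_neighborFinset_eq_degree] using hdeg u)
    _ = (k + 1) * D.card := by rw [sum_const, smul_eq_mul, mul_comm]

theorem tau_le_tau_of_le_of_domNum_eq [Finite V] {G H : SimpleGraph V} (hGH : G ≤ H)
    (hdom : domNum G = domNum H) : tau G ≤ tau H :=
  Set.ncard_le_ncard (fun _ ⟨hD, hcard⟩ => ⟨hD.mono hGH, hcard.trans hdom⟩) (Set.toFinite _)

end Domination

theorem cycleGraph_degree_le_two {n : ℕ} (v : Fin n) : (cycleGraph n).degree v ≤ 2 := by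
  match n with
  | 0 | 1 => exact ((cycleGraph _).degree_lt_card_verts v).le.trans (by simp)
  | n + 2 => exact cycleGraph_degree_two_le ▸ card_le_two

theorem le_domNum_cycleGraph (n : ℕ) : (n + 2) / 3 ≤ domNum (cycleGraph n) :=
  le_domNum fun D hD => by
    have := card_le_mul_card_of_isDomSet cycleGraph_degree_le_two hD
    rw [Fintype.card_fin] at this
    omega

theorem domNum_pathGraph_le (n : ℕ) : domNum (pathGraph n) ≤ (n + 2) / 3 := by
  cases n with
  | zero => exact domNum_le_card (D := ∅) fun v => v.elim0
  | succ m =>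
    -- the vertices `1, 4, 7, …`, the last one clamped to the end of the path
    let center : ℕ → Fin (m + 1) := fun k => ⟨min (3 * k + 1) m, by omega⟩
    have hD : IsDomSet (pathGraph (m + 1)) ((range ((m + 3) / 3)).image center) := by
      intro v hv
      have hv_mem : v.val / 3 < (m + 3) / 3 := by omega
      refine ⟨center (v.val / 3), mem_image_of_mem _ (mem_range.mpr hv_mem), ?_⟩
      have hne : center (v.val / 3) ≠ v := fun h =>
        hv (h ▸ mem_image_of_mem _ (mem_range.mpr hv_mem))
      rw [pathGraph_adj]
      rw [Ne, Fin.ext_iff] at hne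
      simp only [center] at hne ⊢
      omega
    exact (domNum_le_card hD).trans (card_image_le.trans (card_range _).le)

theorem stmt_16_general (n : ℕ) :
    tau (SimpleGraph.pathGraph n) ≤ tau (SimpleGraph.cycleGraph n) :=
  tau_le_tau_of_le_of_domNum_eq pathGraph_le_cycleGraph <|
    le_antisymm ((domNum_pathGraph_le n).trans (le_domNum_cycleGraph n))
      (domNum_anti pathGraph_le_cycleGraph)

theorem stmt_16 (n : ℕ) (hn : 3 ≤ n) :
    tau (SimpleGraph.pathGraph n) ≤ tau (SimpleGraph.cycleGraph n) :=
  stmt_16_general n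
end
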